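/- If a bilateral contract takes a transition under an action of A via one of the non-failure rules [IntExt], [IntInt] or [ExtExt], the resulting contract of B begins with a rdy prefix, and at most one rdy prefix occurs in the resulting bilateral contract; in particular, if γ —→ A says rdy a.c | B says d, then d is rdy-free. -/

import Mathlib

/-! Contracts à la Castagna et al., as in "Contracts in distributed systems".
Atoms are integers; the involution `co` is negation, the success atom `e` is 0
(so that `co e = e`). Contracts use de Bruijn indices for recursion variables. -/

abbrev Atom := ℤ

def co (a : Atom) : Atom := -a

def eAtom : Atom := 0

inductive Contract : Type where
  | intSum : List (Atom × Contract) → Contract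
  | extSum : List (Atom × Contract) → Contract
  | rdy    : Atom → Contract → Contract
  | recur  : Contract → Contract
  | var    : ℕ → Contract

namespace Contract

/-- The failure contract `0` (empty internal and external sums are identified
by structural congruence). -/
def isZero (c : Contract) : Prop := c = intSum [] ∨ c = extSum []

-- Substitution of a (closed) contract `u` for de Bruijn variable `k`.
mutual
def csubst (u : Contract) : ℕ → Contract → Contract
  | k, var n => if n = k then u else var n
  | k, recur c => recur (csubst u (k+1) c)
  | k, rdy a c => rdy a (csubst u k c)
  | k, intSum l => intSum (csubstL u k l)
  | k, extSum l => extSum (csubstL u k l)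
def csubstL (u : Contract) : ℕ → List (Atom × Contract) → List (Atom × Contract)
  | _, [] => []
  | k, (a, c) :: t => (a, csubst u k c) :: csubstL u k t
end

/-- The success contract `E = rec X. e ; X`. -/
def Econ : Contract := recur (intSum [(eAtom, var 0)])

/-- `var n` occurs unguarded (not under any sum / rdy prefix). -/
inductive UnguardedVar : ℕ → Contract → Prop where
  | var : UnguardedVar n (var n)
  | recur : UnguardedVar (n+1) c → UnguardedVar n (recur c)

/-- Well-formed contracts with free variables below `k`: atoms in each sum are
pairwise distinct, recursion is guarded. -/
inductive WF : ℕ → Contract → Prop where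
  | intSum : (l.map Prod.fst).Nodup → (∀ p ∈ l, WF k p.2) → WF k (intSum l)
  | extSum : (l.map Prod.fst).Nodup → (∀ p ∈ l, WF k p.2) → WF k (extSum l)
  | rdy : WF k c → WF k (rdy a c)
  | recur : ¬ UnguardedVar 0 c → WF (k+1) c → WF k (recur c)
  | var : n < k → WF k (var n)

/-- `rdy`-free contracts. -/
inductive RdyFree : Contract → Prop where
  | intSum : (∀ p ∈ l, RdyFree p.2) → RdyFree (intSum l)
  | extSum : (∀ p ∈ l, RdyFree p.2) → RdyFree (extSum l)
  | recur : RdyFree c → RdyFree (recur c)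
  | var : RdyFree (var n)

/-- `0`-free contracts: no empty sum occurs. -/
inductive ZeroFree : Contract → Prop where
  | intSum : l ≠ [] → (∀ p ∈ l, ZeroFree p.2) → ZeroFree (intSum l)
  | extSum : l ≠ [] → (∀ p ∈ l, ZeroFree p.2) → ZeroFree (extSum l)
  | rdy : ZeroFree c → ZeroFree (rdy a c)
  | recur : ZeroFree c → ZeroFree (recur c)
  | var : ZeroFree (var n)

/-- A `rdy` prefix may occur at top level only. -/
def TopRdy (c : Contract) : Prop :=
  RdyFree c ∨ ∃ a c', c = rdy a c' ∧ RdyFree c'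

end Contract

open Contract

/-- One step of participant `A` (first component) in a bilateral contract
`A says c | B says d`: rules [IntExt], [IntInt], [ExtExt], [Rdy] and the
failure rules, plus unfolding of recursion (structural congruence). -/
inductive StepA : Contract → Contract → Atom → Contract → Contract → Prop where
  | intExt : (a, c') ∈ l → (co a, d') ∈ m →
      StepA (.intSum l) (.extSum m) a c' (.rdy (co a) d')
  | intInt : (a, c') ∈ l →
      StepA (.intSum l) (.intSum [(co a, d')]) a c' (.rdy (co a) d')
  | extExt : (a, c') ∈ l → (co a, d') ∈ m →
      StepA (.extSum l) (.extSum m) a c' (.rdy (co a) d')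
  | rdy : StepA (.rdy a c) d a c d
  | intExtFail : (a, c') ∈ l → (∀ q ∈ m, co q.1 ≠ a) →
      StepA (.intSum l) (.extSum m) a Econ (.intSum [])
  | intIntFail : (a, c') ∈ l → ¬ (m ≠ [] ∧ ∀ q ∈ m, co q.1 = a) →
      StepA (.intSum l) (.intSum m) a Econ (.intSum [])
  | extExtFail : (a, c') ∈ l → (∀ p ∈ l, ∀ q ∈ m, p.1 ≠ co q.1) →
      StepA (.extSum l) (.extSum m) a Econ (.intSum [])
  | recL : StepA (csubst (.recur c) 0 c) d a c' d' → StepA (.recur c) d a c' d'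
  | recR : StepA c (csubst (.recur d) 0 d) a c' d' → StepA c (.recur d) a c' d'

/-- The two participants of a bilateral contract. -/
inductive Ptp : Type where
  | A | B
deriving DecidableEq

inductive CLabel : Type where
  | says : Ptp → Atom → CLabel
deriving DecidableEq

/-- Labelled transitions of bilateral contracts. -/
inductive Step : Contract × Contract → CLabel → Contract × Contract → Prop where
  | left  : StepA c d a c' d' → Step (c, d) (.says .A a) (c', d')
  | right : StepA d c a d' c' → Step (c, d) (.says .B a) (c', d')

/-- Participant `p` is culpable in the bilateral contract `γ`. -/
def frown (p : Ptp) (γ : Contract × Contract) : Prop :=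
  isZero (match p with | .A => γ.1 | .B => γ.2) ∨
  ((¬ ∃ γ', Step γ (.says p eAtom) γ') ∧ (∃ a γ', Step γ (.says p a) γ'))

/-- Tokens occurring in ready sets: atoms, or the `rdy` marker. -/
inductive RToken : Type where
  | atom : Atom → RToken
  | rdy  : RToken
deriving DecidableEq

def coT : RToken → RToken
  | .atom a => .atom (co a)
  | .rdy => .rdy

/-- Ready sets. -/
def RS : Contract → Set (Set RToken)
  | .intSum [] => {∅}
  | .intSum (p :: l) => {X | ∃ q ∈ p :: l, X = {RToken.atom q.1}}
  | .extSum [] => {∅}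
  | .extSum (p :: l) => {X | X = {t | ∃ q ∈ p :: l, t = RToken.atom q.1}}
  | .rdy _ _ => {{RToken.rdy}}
  | .recur c => RS c
  | .var _ => {∅}

/-- The defining clauses of compliance. -/
def ComplianceRel (R : Contract → Contract → Prop) : Prop :=
  ∀ c d, R c d →
    (∀ X ∈ RS c, ∀ Y ∈ RS d,
        (∃ t ∈ X, coT t ∈ Y) ∨ RToken.rdy ∈ (X ∪ Y) \ (X ∩ Y)) ∧
    (∀ μ c' d', Step (c, d) μ (c', d') → R c' d')

/-- Compliance: the largest relation satisfying `CompRel`. -/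
def Compliant (c d : Contract) : Prop := ∃ R, ComplianceRel R ∧ R c d

/-- A contract succeeds. -/
def Succeeds (c : Contract) : Prop :=
  (∃ l, c = .intSum l ∧ (eAtom, Econ) ∈ l) ∨
  (∃ l, c = .extSum l ∧ (eAtom, Econ) ∈ l) ∨
  c = .rdy eAtom Econ

/-- Multi-step reduction of bilateral contracts. -/
def Reduces : Contract × Contract → Contract × Contract → Prop :=
  Relation.ReflTransGen (fun γ γ' => ∃ μ, Step γ μ γ')

/-- Bilateral well-formedness: `rdy` at top level only and at most one `rdy`. -/
def BCWF (γ : Contract × Contract) : Prop :=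
  TopRdy γ.1 ∧ TopRdy γ.2 ∧ (RdyFree γ.1 ∨ RdyFree γ.2)

namespace Contract

lemma csubstL_eq_map (u : Contract) (k : ℕ) (l : List (Atom × Contract)) :
    csubstL u k l = l.map fun p => (p.1, csubst u k p.2) := by
  induction l with
  | nil => rfl
  | cons p t ih => simp [csubstL, ih]

lemma RdyFree.csubst {u c : Contract} (hu : RdyFree u) (hc : RdyFree c) (k : ℕ) :
    RdyFree (Contract.csubst u k c) := by
  induction hc generalizing k with
  | intSum _ ih =>
      rw [Contract.csubst, csubstL_eq_map]
      exact .intSum fun _ hp => by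
        obtain ⟨q, hq, rfl⟩ := List.mem_map.mp hp
        exact ih q hq k
  | extSum _ ih =>
      rw [Contract.csubst, csubstL_eq_map]
      exact .extSum fun _ hp => by
        obtain ⟨q, hq, rfl⟩ := List.mem_map.mp hp
        exact ih q hq k
  | recur _ ih => exact .recur (ih (k + 1))
  | var =>
      rw [Contract.csubst]
      split
      · exact hu
      · exact .var

lemma RdyFree.unfold {c : Contract} (hc : RdyFree (Contract.recur c)) :
    RdyFree (Contract.csubst (Contract.recur c) 0 c) := by
  cases hc with
  | recur h => exact RdyFree.csubst (.recur h) h 0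

lemma rdyFree_econ : RdyFree Econ :=
  .recur (.intSum fun p hp => by simp only [List.mem_singleton] at hp; exact hp ▸ .var)

lemma rdyFree_zero : RdyFree (intSum []) :=
  .intSum nofun

lemma TopRdy.rdyFree {c : Contract} (h : TopRdy c) (hc : ∀ a c', c ≠ rdy a c') :
    RdyFree c := by
  rcases h with h | ⟨a, c', rfl, -⟩
  · exact h
  · exact absurd rfl (hc a c')

lemma RdyFree.mem_intSum {l : List (Atom × Contract)} (h : RdyFree (Contract.intSum l))
    {p : Atom × Contract} (hp : p ∈ l) : RdyFree p.2 := by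
  cases h with
  | intSum h => exact h p hp

lemma RdyFree.mem_extSum {l : List (Atom × Contract)} (h : RdyFree (Contract.extSum l))
    {p : Atom × Contract} (hp : p ∈ l) : RdyFree p.2 := by
  cases h with
  | extSum h => exact h p hp

lemma topRdy_rdy {a : Atom} {c : Contract} (hc : RdyFree c) : TopRdy (rdy a c) :=
  .inr ⟨a, c, rfl, hc⟩

end Contract

/-- The participant who moves is left `rdy`-free: its own `rdy` prefix, if any, is consumed
by [Rdy], and otherwise it continues with a branch of a `rdy`-free sum or with `E`. -/
lemma StepA.rdyFree_topRdy {c d c' d' : Contract} {a : Atom} (h : StepA c d a c' d')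
    (hc : TopRdy c) (hd : TopRdy d) : RdyFree c' ∧ TopRdy d' := by
  induction h with
  | intExt h₁ h₂ =>
      exact ⟨(hc.rdyFree (by simp)).mem_intSum h₁,
        topRdy_rdy ((hd.rdyFree (by simp)).mem_extSum h₂)⟩
  | intInt h₁ =>
      exact ⟨(hc.rdyFree (by simp)).mem_intSum h₁,
        topRdy_rdy ((hd.rdyFree (by simp)).mem_intSum List.mem_cons_self)⟩
  | extExt h₁ h₂ =>
      exact ⟨(hc.rdyFree (by simp)).mem_extSum h₁,
        topRdy_rdy ((hd.rdyFree (by simp)).mem_extSum h₂)⟩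
  | rdy =>
      rcases hc with h | ⟨_, _, ⟨⟩, hc'⟩
      · nomatch h
      · exact ⟨hc', hd⟩
  | intExtFail | intIntFail | extExtFail => exact ⟨rdyFree_econ, .inl rdyFree_zero⟩
  | recL _ ih => exact ih (.inl (hc.rdyFree (by simp)).unfold) hd
  | recR _ ih => exact ih hc (.inl (hd.rdyFree (by simp)).unfold)

/-- transitions preserve the invariant that at most one `rdy` prefix
occurs (at top level); in particular, if `γ ⟶ A says rdy a.c' | B says d'`, then
`d'` is `rdy`-free (and symmetrically). -/
theorem stmt7 (c d : Contract) (hwf : BCWF (c, d)) (μ : CLabel)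
    (γ' : Contract × Contract) (hstep : Step (c, d) μ γ') :
    BCWF γ' ∧
    (∀ a c' d', γ' = (.rdy a c', d') → Contract.RdyFree d') ∧
    (∀ a c' d', γ' = (c', .rdy a d') → Contract.RdyFree c') := by
  obtain ⟨hc, hd, -⟩ := hwf
  cases hstep with
  | left h =>
      obtain ⟨hc', hd'⟩ := h.rdyFree_topRdy hc hd
      refine ⟨⟨.inl hc', hd', .inl hc'⟩, ?_, ?_⟩
      · rintro _ _ _ ⟨⟩
        nomatch hc'
      · rintro _ _ _ ⟨⟩
        exact hc'
  | right h =>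
      obtain ⟨hd', hc'⟩ := h.rdyFree_topRdy hd hc
      refine ⟨⟨hc', .inl hd', .inr hd'⟩, ?_, ?_⟩
      · rintro _ _ _ ⟨⟩
        exact hd'
      · rintro _ _ _ ⟨⟩
        nomatch hd'
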